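/- If a strongly regular graph with parameters (n, k, 1, 2) exists with k ≥ 2, then n = (k²+2)/2 and the number of 5-cycles nk(k-2)(k-4)/5 is a nonnegative integer; in particular 5 divides nk(k-2)(k-4). -/

import Mathlib

/-!
Over `ZMod 5`, Frobenius gives `tr (A⁵) = (tr A)⁵ = 0` for the adjacency matrix `A`. On the other
hand `A² = (k - 2) I - A + 2 J` and `A J = k J`, so the traces `tₘ = tr Aᵐ` satisfy
`tₘ₊₂ = (k - 2) tₘ - tₘ₊₁ + 2 kᵐ n`, whence `t₅ = n k (2k² - 2k + 1) ≡ 2 n k (k - 2) (k - 4) (mod 5)`.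
Multiplying the quadratic relation by `J` gives `k² = k - 2 - k + 2n`, i.e. `2n = k² + 2`.
-/

open Matrix

namespace Matrix

variable {V R : Type*} [Fintype V]

theorem of_one_mul_of_one [NonAssocSemiring R] :
    (of 1 : Matrix V V R) * of 1 = (Fintype.card V : R) • of 1 := by
  ext v w
  simp [Matrix.mul_apply]

theorem trace_of_one [AddCommMonoidWithOne R] : (of 1 : Matrix V V R).trace = Fintype.card V := by
  simp [Matrix.trace]

end Matrix

namespace SimpleGraph

variable {V R : Type*} {G : SimpleGraph V} [DecidableRel G.Adj] {n k ℓ μ : ℕ}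

theorem adjMatrix_compl_eq_of_one_sub_one_sub_adjMatrix [DecidableEq V] [AddCommGroup R] [One R] :
    Gᶜ.adjMatrix R = of 1 - 1 - G.adjMatrix R := by
  rw [← adjMatrix_completeGraph_eq_of_one_sub_one,
    ← IsCompl.adjMatrix_add_adjMatrix_eq_adjMatrix_completeGraph R (isCompl_compl (x := G)),
    add_sub_cancel_left]

variable [Fintype V]

theorem IsRegularOfDegree.adjMatrix_mul_of_one [NonAssocSemiring R] (h : G.IsRegularOfDegree k) :
    G.adjMatrix R * of 1 = (k : R) • of 1 := by
  ext v w
  simp [h v]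

variable [DecidableEq V]

theorem IsRegularOfDegree.adjMatrix_pow_mul_of_one [CommSemiring R] (h : G.IsRegularOfDegree k)
    (m : ℕ) : G.adjMatrix R ^ m * of 1 = (k : R) ^ m • of 1 := by
  induction m with
  | zero => simp
  | succ m ih =>
    rw [pow_succ', mul_assoc, ih, mul_smul_comm, h.adjMatrix_mul_of_one, smul_smul, ← pow_succ]

variable [CommRing R]

theorem IsSRGWith.adjMatrix_sq (h : G.IsSRGWith n k ℓ μ) :
    G.adjMatrix R ^ 2 = ((k : R) - μ) • 1 + ((ℓ : R) - μ) • G.adjMatrix R + (μ : R) • of 1 := by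
  rw [h.matrix_eq, adjMatrix_compl_eq_of_one_sub_one_sub_adjMatrix]
  simp only [← Nat.cast_smul_eq_nsmul R]
  module

theorem IsSRGWith.trace_adjMatrix_pow_add_two (h : G.IsSRGWith n k ℓ μ) (m : ℕ) :
    (G.adjMatrix R ^ (m + 2)).trace = ((k : R) - μ) * (G.adjMatrix R ^ m).trace
      + ((ℓ : R) - μ) * (G.adjMatrix R ^ (m + 1)).trace + μ * k ^ m * n := by
  rw [pow_add, h.adjMatrix_sq, mul_add, mul_add, mul_smul_comm, mul_smul_comm, mul_smul_comm,
    mul_one, ← pow_succ, h.regular.adjMatrix_pow_mul_of_one, trace_add, trace_add, trace_smul,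
    trace_smul, trace_smul, trace_smul, trace_of_one, h.card]
  simp only [smul_eq_mul]
  ring

theorem IsSRGWith.trace_adjMatrix_pow_five (h : G.IsSRGWith n k 1 2) :
    (G.adjMatrix R ^ 5).trace = n * k * (2 * k ^ 2 - 2 * k + 1) := by
  have t0 : (G.adjMatrix R ^ 0).trace = n := by simp [h.card]
  have t1 : (G.adjMatrix R ^ 1).trace = 0 := by simp
  have t2 := h.trace_adjMatrix_pow_add_two (R := R) 0
  have t3 := h.trace_adjMatrix_pow_add_two (R := R) 1
  have t4 := h.trace_adjMatrix_pow_add_two (R := R) 2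
  have t5 := h.trace_adjMatrix_pow_add_two (R := R) 3
  simp only [t0, t1, Nat.cast_one, Nat.cast_ofNat, zero_add] at t2 t3 t4 t5
  rw [t5, t4, t3, t2]
  ring

-- `IsSRGWith.param_eq` without the truncated subtraction of `ℕ`.
theorem IsSRGWith.param_eq_int (h : G.IsSRGWith n k ℓ μ) (hn : 0 < n) :
    (k : ℤ) * (k - ℓ - 1) = (n - k - 1) * μ := by
  obtain ⟨v⟩ : Nonempty V := Fintype.card_pos_iff.mp (h.card ▸ hn)
  have hJ := h.regular.adjMatrix_pow_mul_of_one (R := ℤ) 2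
  rw [h.adjMatrix_sq, add_mul, add_mul, smul_mul_assoc, smul_mul_assoc, smul_mul_assoc, one_mul,
    h.regular.adjMatrix_mul_of_one, of_one_mul_of_one, h.card, smul_smul, smul_smul,
    ← add_smul, ← add_smul] at hJ
  have := congrFun₂ hJ v v
  simp only [Matrix.smul_apply, of_apply, Pi.one_apply, smul_eq_mul, mul_one] at this
  linear_combination -this

theorem IsSRGWith.two_mul_eq_sq_add_two (h : G.IsSRGWith n k 1 2) (hn : 0 < n) :
    2 * n = k ^ 2 + 2 := by
  have := h.param_eq_int hn
  push_cast at this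
  zify
  linear_combination -this

theorem IsSRGWith.five_dvd_mul_sub_two_mul_sub_four (h : G.IsSRGWith n k 1 2) :
    (5 : ℤ) ∣ n * k * (k - 2) * (k - 4) := by
  have : Fact (Nat.Prime 5) := ⟨by norm_num⟩
  have htr := h.trace_adjMatrix_pow_five (R := ZMod 5)
  rw [ZMod.trace_pow_card, trace_adjMatrix, zero_pow (by norm_num)] at htr
  have h5 : (5 : ZMod 5) = 0 := rfl
  refine (ZMod.intCast_zmod_eq_zero_iff_dvd _ 5).mp ?_
  push_cast
  linear_combination -3 * htr + n * k * (1 - k ^ 2) * h5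

end SimpleGraph

theorem srg_pentagon_divisibility_general {V : Type*} [Fintype V] (G : SimpleGraph V)
    [DecidableRel G.Adj] {n k : ℕ} (h : G.IsSRGWith n k 1 2) (hn : 0 < n) :
    2 * n = k ^ 2 + 2 ∧ 5 ∣ n * k * (k - 2) * (k - 4) := by
  classical
  refine ⟨h.two_mul_eq_sq_add_two hn, ?_⟩
  rcases lt_or_ge k 4 with hk | hk
  · simp [Nat.sub_eq_zero_of_le hk.le]
  · zify [hk, hk.trans' (by norm_num : 2 ≤ 4)]
    exact h.five_dvd_mul_sub_two_mul_sub_four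

/-- If an `srg(n,k,1,2)` with `k ≥ 2` exists, then `n = (k²+2)/2` and
`5 ∣ nk(k-2)(k-4)` (so the pentagon count `nk(k-2)(k-4)/5` is a nonnegative integer). -/
theorem srg_pentagon_divisibility {V : Type*} [Fintype V] (G : SimpleGraph V)
    [DecidableRel G.Adj] {n k : ℕ} (h : G.IsSRGWith n k 1 2) (hk : 2 ≤ k) (hn : 0 < n) :
    2 * n = k ^ 2 + 2 ∧ 5 ∣ n * k * (k - 2) * (k - 4) :=
  srg_pentagon_divisibility_general G h hn
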